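/- For every integer k ≥ 1, the identity (U_k(x/2) + (−1)^k U_{k−1}(x/2)) · G_k(x) = −(U_{k−2}(x/2) + (−1)^k U_{k−3}(x/2)) holds in ℚ⟦x⟧, where G_k(x) := 1 + Σ_{n≥0} |A_n^{(k)}| x^{n+1} is the cumulative generating function of all bounded alternating sequences, and where Chebyshev polynomials of negative index are defined by extending the recurrence (so U_{−1} = 0 and U_{−2}(x) = −1). -/

import Mathlib

/-- Number of alternating sequences of length `n` bounded by `k`
(with `altCount k 0 = 1`, counting the empty sequence). -/
noncomputable def altCount (k n : ℕ) : ℕ :=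
  Nat.card {a : Fin n → ℤ //
    (∀ i, 1 ≤ a i ∧ a i ≤ k) ∧
    (∀ (i : ℕ) (h : i + 1 < n),
      if i % 2 = 0 then a ⟨i, Nat.lt_of_succ_lt h⟩ ≤ a ⟨i + 1, h⟩
      else a ⟨i + 1, h⟩ ≤ a ⟨i, Nat.lt_of_succ_lt h⟩)}

/-- `U2 m` is the polynomial `U_m(x/2)`, where `U_m` is the `m`-th Chebyshev
polynomial of the second kind, indexed over all of `ℤ` by extending the
recurrence backwards (so `U_{-1} = 0` and `U_{-2} = -1`). -/
noncomputable def U2 (m : ℤ) : Polynomial ℚ :=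
  (Polynomial.Chebyshev.U ℚ m).comp (Polynomial.C (1/2 : ℚ) * Polynomial.X)

/-- The cumulative generating function `G_k(x) = 1 + Σ_{n≥0} |A_n^{(k)}| x^{n+1}`
of all bounded alternating sequences. -/
noncomputable def cumulativeGF (k : ℕ) : PowerSeries ℚ :=
  PowerSeries.mk fun n => match n with
    | 0 => 1
    | m + 1 => (altCount k m : ℚ)


section ChebLayer
open Polynomial

lemma C_half_two : (C (1/2 : ℚ)) * 2 = 1 := by
  rw [show (2 : ℚ[X]) = C 2 from (map_ofNat C 2).symm, ← C_mul]; norm_num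

lemma U2_add_two (m : ℤ) : U2 (m + 2) = X * U2 (m + 1) - U2 m := by
  unfold U2
  rw [Polynomial.Chebyshev.U_add_two, sub_comp, mul_comp, mul_comp, ofNat_comp, X_comp]
  push_cast
  linear_combination (X * (Chebyshev.U ℚ (m+1)).comp (C (1/2 : ℚ) * X)) * C_half_two

lemma U2_zero : U2 0 = 1 := by
  unfold U2; rw [Polynomial.Chebyshev.U_zero, one_comp]

lemma U2_one : U2 1 = X := by
  unfold U2
  rw [Polynomial.Chebyshev.U_one, mul_comp, ofNat_comp, X_comp]
  push_cast
  linear_combination X * C_half_two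

lemma U2_neg_one : U2 (-1) = 0 := by
  unfold U2; rw [Polynomial.Chebyshev.U_neg_one, zero_comp]

lemma U2_neg_two : U2 (-2) = -1 := by
  unfold U2; rw [Polynomial.Chebyshev.U_neg_two, neg_comp, one_comp]

lemma U2_inv (m : ℤ) : (U2 m)^2 + (U2 (m+1))^2 - X * U2 m * U2 (m+1) = 1 := by
  induction m using Int.induction_on with
  | zero => rw [U2_zero, show ((0:ℤ)+1) = 1 by ring, U2_one]; ring
  | succ n ih =>
      have h2 : U2 ((n:ℤ) + 2) = X * U2 (n + 1) - U2 n := U2_add_two n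
      rw [show ((n:ℤ) + 1 + 1) = (n:ℤ) + 2 by ring, h2]
      linear_combination ih
  | pred n ih =>
      have h2 := U2_add_two (-(n:ℤ) - 1)
      rw [show (-(n:ℤ) - 1) + 2 = -(n:ℤ) + 1 by ring,
        show (-(n:ℤ) - 1) + 1 = -(n:ℤ) by ring] at h2
      rw [h2] at ih
      rw [show (-(n:ℤ) - 1 + 1) = -(n:ℤ) by ring]
      linear_combination ih


/-- Pair (Q_t, S_t). -/
noncomputable def QS : ℕ → ℚ[X] × ℚ[X]
  | 0 => (1, X)
  | t+1 =>
      let q := (QS t).1 - X * (QS t).2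
      (q, (QS t).2 + X * q)

noncomputable def Qp (t : ℕ) : ℚ[X] := (QS t).1
noncomputable def Sp (t : ℕ) : ℚ[X] := (QS t).2

lemma Qp_succ (t : ℕ) : Qp (t+1) = Qp t - X * Sp t := rfl
lemma Sp_succ (t : ℕ) : Sp (t+1) = Sp t + X * Qp (t+1) := rfl
lemma Qp_zero : Qp 0 = 1 := rfl
lemma Sp_zero : Sp 0 = X := rfl

lemma Qp_rec (t : ℕ) : Qp (t+2) = (2 - X^2) * Qp (t+1) - Qp t := by
  rw [Qp_succ (t+1), Sp_succ t, Qp_succ t]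
  ring

/-- generic two-step identity modulo the Chebyshev invariant -/
lemma step_id (m : ℤ) (ε : ℚ[X]) (hε : ε = 1 ∨ ε = -1) :
    X + (U2 (m+5) + ε * U2 (m+4)) * (U2 (m+2) - ε * U2 (m+3))
      = (2 - X^2) * (X + (U2 (m+4) - ε * U2 (m+3)) * (U2 (m+1) + ε * U2 (m+2)))
        - (X + (U2 (m+3) + ε * U2 (m+2)) * (U2 m - ε * U2 (m+1))) := by
  have h2 : U2 (m+2) = X * U2 (m+1) - U2 m := U2_add_two m
  have h3 : U2 (m+3) = X * U2 (m+2) - U2 (m+1) := by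
    have := U2_add_two (m+1); rw [show m+1+2 = m+3 by ring, show m+1+1 = m+2 by ring] at this
    exact this
  have h4 : U2 (m+4) = X * U2 (m+3) - U2 (m+2) := by
    have := U2_add_two (m+2); rw [show m+2+2 = m+4 by ring, show m+2+1 = m+3 by ring] at this
    exact this
  have h5 : U2 (m+5) = X * U2 (m+4) - U2 (m+3) := by
    have := U2_add_two (m+3); rw [show m+3+2 = m+5 by ring, show m+3+1 = m+4 by ring] at this
    exact this
  have hinv := U2_inv m
  rw [h5, h4, h3, h2]
  rcases hε with h | h <;> subst h <;> linear_combination (-X^3) * hinv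

lemma B_id (m : ℤ) (ε : ℚ[X]) (hε : ε = 1 ∨ ε = -1) :
    X + (U2 (m+3) + ε * U2 (m+2)) * (U2 m - ε * U2 (m+1))
      = -((U2 (m+2) - ε * U2 (m+1)) * (U2 (m+1) + ε * U2 (m+2))) := by
  have h2 : U2 (m+2) = X * U2 (m+1) - U2 m := U2_add_two m
  have h3 : U2 (m+3) = X * U2 (m+2) - U2 (m+1) := by
    have := U2_add_two (m+1); rw [show m+1+2 = m+3 by ring, show m+1+1 = m+2 by ring] at this
    exact this
  have hinv := U2_inv m
  rw [h3, h2]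
  rcases hε with h | h <;> subst h <;> linear_combination (-X) * hinv

/-- closed form for Q. -/
lemma Qp_closed (t : ℕ) :
    Qp t = X + (U2 (t+1) + (-1:ℚ[X])^(t+1) * U2 t)
      * (U2 ((t:ℤ)-2) + (-1:ℚ[X])^t * U2 ((t:ℤ)-1)) := by
  induction t using Nat.twoStepInduction with
  | zero =>
      rw [Qp_zero]
      push_cast
      rw [U2_one, U2_zero, U2_neg_two, U2_neg_one]
      ring
  | one =>
      rw [Qp_succ, Qp_zero, Sp_zero]
      push_cast
      have h := U2_add_two 0
      norm_num at h
      rw [h, U2_one, U2_zero, U2_neg_one]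
      ring
  | more t ih ih1 =>
      rw [Qp_rec, ih1, ih]
      have hε : ((-1:ℚ[X])^(t+1) = 1 ∨ (-1:ℚ[X])^(t+1) = -1) := by
        rcases Nat.even_or_odd (t+1) with h | h
        · exact Or.inl h.neg_one_pow
        · exact Or.inr h.neg_one_pow
      have key := step_id ((t:ℤ)-2) ((-1:ℚ[X])^(t+1)) hε
      rw [show (t:ℤ)-2+5 = ((t:ℤ)+2)+1 by ring, show (t:ℤ)-2+4 = (t:ℤ)+2 by ring,
        show (t:ℤ)-2+3 = (t:ℤ)+1 by ring, show (t:ℤ)-2+2 = (t:ℤ) by ring,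
        show (t:ℤ)-2+1 = (t:ℤ)-1 by ring] at key
      push_cast
      rw [show ((t:ℤ)+2-2) = (t:ℤ) by ring, show ((t:ℤ)+2-1) = (t:ℤ)+1 by ring,
        show ((t:ℤ)+1+1) = (t:ℤ)+2 by ring, show ((t:ℤ)+1-2) = (t:ℤ)-1 by ring,
        show ((t:ℤ)+1-1) = (t:ℤ) by ring, show ((t:ℤ)+2+1) = ((t:ℤ)+2)+1 by ring]
      calc _ = (2 - X^2) * (X + (U2 ((t:ℤ)+2) - (-1:ℚ[X])^(t+1) * U2 ((t:ℤ)+1)) *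
                (U2 ((t:ℤ)-1) + (-1:ℚ[X])^(t+1) * U2 (t:ℤ)))
              - (X + (U2 ((t:ℤ)+1) + (-1:ℚ[X])^(t+1) * U2 (t:ℤ)) *
                (U2 ((t:ℤ)-2) - (-1:ℚ[X])^(t+1) * U2 ((t:ℤ)-1))) := by ring
        _ = _ := by rw [← key]; ring

noncomputable def Ppoly : ℕ → ℚ[X]
  | 0 => 0
  | t+1 => -X * Sp t

lemma Ppoly_succ (t : ℕ) : Ppoly (t+1) = Ppoly t - X * (X * Qp t) := by
  cases t with
  | zero =>
      show -X * Sp 0 = Ppoly 0 - X * (X * Qp 0)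
      rw [Sp_zero, Qp_zero]; show -X * X = 0 - X * (X * 1); ring
  | succ s =>
      show -X * Sp (s+1) = -X * Sp s - X * (X * Qp (s+1))
      rw [Sp_succ]; ring

lemma neg_one_pow_cases (t : ℕ) : ((-1:ℚ[X])^t = 1 ∨ (-1:ℚ[X])^t = -1) := by
  rcases Nat.even_or_odd t with h | h
  · exact Or.inl h.neg_one_pow
  · exact Or.inr h.neg_one_pow

lemma L1 (t : ℕ) : Qp t - X
    = (U2 ((t:ℤ)+1) + (-1:ℚ[X])^(t+1) * U2 t) * (U2 ((t:ℤ)-2) + (-1:ℚ[X])^t * U2 ((t:ℤ)-1)) := by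
  rw [Qp_closed]; ring

lemma L2 (t : ℕ) : X - Ppoly t
    = -(((U2 ((t:ℤ)+1) + (-1:ℚ[X])^(t+1) * U2 t) + (U2 ((t:ℤ)-1) + (-1:ℚ[X])^(t+1) * U2 ((t:ℤ)-2)))
        * (U2 ((t:ℤ)-2) + (-1:ℚ[X])^t * U2 ((t:ℤ)-1))) := by
  cases t with
  | zero =>
      show X - 0 = _
      push_cast
      rw [U2_one, U2_zero, U2_neg_one, U2_neg_two]
      ring
  | succ s =>
      have hxS : X * Sp s = Qp s - Qp (s+1) := by rw [Qp_succ]; ring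
      have hP : Ppoly (s+1) = -X * Sp s := rfl
      have key := B_id ((s:ℤ)-2) ((-1:ℚ[X])^(s+1)) (neg_one_pow_cases (s+1))
      rw [show (s:ℤ)-2+3 = (s:ℤ)+1 by ring, show (s:ℤ)-2+2 = (s:ℤ) by ring,
        show (s:ℤ)-2+1 = (s:ℤ)-1 by ring] at key
      have hc1 := Qp_closed s
      have hc2 := Qp_closed (s+1)
      push_cast at hc2 ⊢
      rw [show ((s:ℤ)+1+1) = (s:ℤ)+2 by ring, show ((s:ℤ)+1-2) = (s:ℤ)-1 by ring,
        show ((s:ℤ)+1-1) = (s:ℤ) by ring] at hc2 ⊢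
      rw [hP]
      linear_combination hxS + hc1 - hc2 + key

lemma U2_eval0_succ (m : ℤ) : (U2 (m+2)).eval 0 = -(U2 m).eval 0 := by
  rw [U2_add_two]; simp

lemma U2_eval0_prod (t : ℕ) : (U2 ((t:ℤ)-2)).eval 0 * (U2 ((t:ℤ)-1)).eval 0 = 0 := by
  induction t with
  | zero => push_cast; norm_num [U2_neg_two, U2_neg_one]
  | succ s ih =>
      push_cast
      rw [show ((s:ℤ)+1-2) = (s:ℤ)-1 by ring, show ((s:ℤ)+1-1) = ((s:ℤ)-2)+2 by ring,
        U2_eval0_succ]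
      rw [mul_comm] at ih
      linear_combination -ih

lemma U2_eval0_sq (m : ℤ) : ((U2 m).eval 0)^2 + ((U2 (m+1)).eval 0)^2 = 1 := by
  have := U2_inv m
  have h := congrArg (Polynomial.eval 0) this
  simpa using h

lemma L3 (t : ℕ) : (U2 ((t:ℤ)-2) + (-1:ℚ[X])^t * U2 ((t:ℤ)-1)) ≠ 0 := by
  intro h
  have h0 := congrArg (Polynomial.eval 0) h
  have hsq := U2_eval0_sq ((t:ℤ)-2)
  rw [show ((t:ℤ)-2+1) = (t:ℤ)-1 by ring] at hsq
  have hpr := U2_eval0_prod t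
  rcases neg_one_pow_cases t with he | he <;> rw [he] at h0 <;> simp at h0 <;> nlinarith [h0, hsq, hpr]

lemma hsgn (k : ℕ) (hk : 1 ≤ k) : (-1 : ℚ[X])^(k-1) = -(-1 : ℚ[X])^k := by
  rcases Nat.even_or_odd k with h | h
  · have h1 : Odd (k-1) := by rcases h with ⟨m, hm⟩; exact ⟨m-1, by omega⟩
    simp [h1.neg_one_pow, h.neg_one_pow]
  · have h1 : Even (k-1) := by rcases h with ⟨m, hm⟩; exact ⟨m, by omega⟩
    simp [h1.neg_one_pow, h.neg_one_pow]

lemma L1k (k : ℕ) (hk : 1 ≤ k) : Qp (k-1) - X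
    = (U2 k + (-1 : ℚ[X])^k * U2 ((k:ℤ)-1))
      * (U2 ((k:ℤ)-3) - (-1 : ℚ[X])^k * U2 ((k:ℤ)-2)) := by
  have h := L1 (k-1)
  rw [show (((k-1:ℕ)):ℤ) = (k:ℤ)-1 by omega, Nat.sub_add_cancel hk] at h
  rw [show ((k:ℤ)-1+1) = (k:ℤ) by ring, show ((k:ℤ)-1-2) = (k:ℤ)-3 by ring,
    show ((k:ℤ)-1-1) = (k:ℤ)-2 by ring, hsgn k hk] at h
  rw [h]; ring

lemma L2k (k : ℕ) (hk : 1 ≤ k) : X - Ppoly (k-1)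
    = -(((U2 k + (-1 : ℚ[X])^k * U2 ((k:ℤ)-1))
        + (U2 ((k:ℤ)-2) + (-1 : ℚ[X])^k * U2 ((k:ℤ)-3)))
      * (U2 ((k:ℤ)-3) - (-1 : ℚ[X])^k * U2 ((k:ℤ)-2))) := by
  have h := L2 (k-1)
  rw [show (((k-1:ℕ)):ℤ) = (k:ℤ)-1 by omega, Nat.sub_add_cancel hk] at h
  rw [show ((k:ℤ)-1+1) = (k:ℤ) by ring, show ((k:ℤ)-1-2) = (k:ℤ)-3 by ring,
    show ((k:ℤ)-1-1) = (k:ℤ)-2 by ring, hsgn k hk] at h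
  rw [h]; ring

lemma L3k (k : ℕ) (hk : 1 ≤ k) :
    (U2 ((k:ℤ)-3) - (-1 : ℚ[X])^k * U2 ((k:ℤ)-2)) ≠ 0 := by
  have h := L3 (k-1)
  rw [show (((k-1:ℕ)):ℤ) = (k:ℤ)-1 by omega, hsgn k hk] at h
  rw [show ((k:ℤ)-1-2) = (k:ℤ)-3 by ring, show ((k:ℤ)-1-1) = (k:ℤ)-2 by ring] at h
  intro hc
  apply h
  linear_combination hc

end ChebLayer

section CombLayer

def pathCond (k n : ℕ) (b : Fin n → Fin k) : Prop :=
  ∀ (i : ℕ) (h : i + 1 < n),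
    (b ⟨i, Nat.lt_of_succ_lt h⟩ : ℕ) + (b ⟨i + 1, h⟩ : ℕ) + 2 ≤ k + 1

def w (k : ℕ) : ℕ → Fin k → ℕ
  | 0, _ => 1
  | n+1, j => ∑ i ∈ Finset.univ.filter (fun i : Fin k => (i:ℕ) + (j:ℕ) + 2 ≤ k + 1), w k n i

def altEquiv (k : ℕ) (n : ℕ) :
    {a : Fin n → ℤ //
      (∀ i, 1 ≤ a i ∧ a i ≤ k) ∧
      (∀ (i : ℕ) (h : i + 1 < n),
        if i % 2 = 0 then a ⟨i, Nat.lt_of_succ_lt h⟩ ≤ a ⟨i + 1, h⟩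
        else a ⟨i + 1, h⟩ ≤ a ⟨i, Nat.lt_of_succ_lt h⟩)}
    ≃ {b : Fin n → Fin k // pathCond k n b} where
  toFun := fun x => ⟨fun i =>
      ⟨if (i:ℕ) % 2 = 0 then (x.1 i - 1).toNat else ((k:ℤ) - x.1 i).toNat, by
        obtain ⟨h1, h2⟩ := x.2.1 i
        split <;> omega⟩, by
      intro i h
      have c := x.2.2 i h
      obtain ⟨u1, u2⟩ := x.2.1 ⟨i, Nat.lt_of_succ_lt h⟩
      obtain ⟨v1, v2⟩ := x.2.1 ⟨i + 1, h⟩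
      dsimp only
      split_ifs at c ⊢ <;> omega⟩
  invFun := fun y => ⟨fun i =>
      if (i:ℕ) % 2 = 0 then ((y.1 i : ℕ) : ℤ) + 1 else (k:ℤ) - ((y.1 i : ℕ) : ℤ), by
    constructor
    · intro i
      have := (y.1 i).isLt
      dsimp only
      split <;> omega
    · intro i h
      have c := y.2 i h
      have l1 := (y.1 ⟨i, Nat.lt_of_succ_lt h⟩).isLt
      have l2 := (y.1 ⟨i + 1, h⟩).isLt
      dsimp only
      split_ifs <;> omega⟩
  left_inv := fun x => Subtype.ext (funext fun i => by
    obtain ⟨h1, h2⟩ := x.2.1 i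
    dsimp only
    split_ifs <;> omega)
  right_inv := fun y => Subtype.ext (funext fun i => by
    have := (y.1 i).isLt
    dsimp only
    refine Fin.ext ?_
    dsimp only
    split_ifs <;> omega)

lemma altCount_eq_path (k n : ℕ) :
    altCount k n = Nat.card {b : Fin n → Fin k // pathCond k n b} :=
  Nat.card_congr (altEquiv k n)

lemma altCount_zero (k : ℕ) : altCount k 0 = 1 := by
  unfold altCount
  have : Unique {a : Fin 0 → ℤ //
      (∀ i, 1 ≤ a i ∧ a i ≤ k) ∧
      (∀ (i : ℕ) (h : i + 1 < 0),
        if i % 2 = 0 then a ⟨i, Nat.lt_of_succ_lt h⟩ ≤ a ⟨i + 1, h⟩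
        else a ⟨i + 1, h⟩ ≤ a ⟨i, Nat.lt_of_succ_lt h⟩)} :=
    { default := ⟨Fin.elim0, fun i => i.elim0, fun i h => by omega⟩
      uniq := fun x => Subtype.ext (funext fun i => i.elim0) }
  exact Nat.card_unique

lemma card_fiber_sum {α : Type*} [Finite α] {k : ℕ} (g : α → Fin k) :
    Nat.card α = ∑ j, Nat.card {a // g a = j} := by
  classical
  cases nonempty_fintype α
  simp_rw [Nat.card_eq_fintype_card]
  rw [← Fintype.card_sigma]
  exact Fintype.card_congr (Equiv.sigmaFiberEquiv g).symm

abbrev PathT (k n : ℕ) := {b : Fin n → Fin k // pathCond k n b}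

/-- paths of length n+1 ending at j -/
abbrev EndT (k n : ℕ) (j : Fin k) := {b : PathT k (n+1) // b.1 (Fin.last n) = j}

lemma snoc_mk_eq {k n : ℕ} (f : Fin (n+1) → Fin k) (z : Fin k) (m : ℕ) (hm : m < n+1) :
    (Fin.snoc f z : Fin (n+2) → Fin k) ⟨m, Nat.lt_succ_of_lt hm⟩ = f ⟨m, hm⟩ := by
  have : (⟨m, Nat.lt_succ_of_lt hm⟩ : Fin (n+2)) = Fin.castSucc ⟨m, hm⟩ := rfl
  rw [this, Fin.snoc_castSucc]

/-- the fiber equivalence, assuming the junction condition -/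
def fiberEquiv (k n : ℕ) (j i : Fin k) (hij : (i:ℕ) + (j:ℕ) + 2 ≤ k + 1) :
    {b : EndT k (n+1) j // b.1.1 (Fin.castSucc (Fin.last n)) = i} ≃ EndT k n i where
  toFun := fun b => ⟨⟨Fin.init b.1.1.1, fun m hm => b.1.1.2 m (Nat.lt_succ_of_lt hm)⟩, b.2⟩
  invFun := fun c => ⟨⟨⟨Fin.snoc c.1.1 j, by
      intro m hm
      rcases Nat.lt_or_ge (m+1) (n+1) with h' | h'
      · rw [snoc_mk_eq c.1.1 j m (Nat.lt_of_succ_lt h'), snoc_mk_eq c.1.1 j (m+1) h']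
        exact c.1.2 m h'
      · have hm1 : m = n := by omega
        subst hm1
        have e1 : (⟨m+1, hm⟩ : Fin (m+2)) = Fin.last (m+1) := rfl
        rw [e1, Fin.snoc_last, snoc_mk_eq c.1.1 j m (Nat.lt_succ_self m)]
        have : c.1.1 ⟨m, Nat.lt_succ_self m⟩ = i := c.2
        rw [this]
        exact hij⟩, by
      show (Fin.snoc c.1.1 j : Fin (n+2) → Fin k) (Fin.last (n+1)) = j
      rw [Fin.snoc_last]⟩, by
      show (Fin.snoc c.1.1 j : Fin (n+2) → Fin k) (Fin.castSucc (Fin.last n)) = i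
      rw [Fin.snoc_castSucc]
      exact c.2⟩
  left_inv := fun b => by
    refine Subtype.ext (Subtype.ext (Subtype.ext ?_))
    show Fin.snoc (Fin.init b.1.1.1) j = b.1.1.1
    have hl : b.1.1.1 (Fin.last (n+1)) = j := b.1.2
    have h2 := Fin.snoc_init_self b.1.1.1
    rw [hl] at h2
    exact h2
  right_inv := fun c => by
    refine Subtype.ext (Subtype.ext ?_)
    exact @Fin.init_snoc (n+1) (fun _ => Fin k) j c.1.1

lemma fiber_empty (k n : ℕ) (j i : Fin k) (hij : ¬ ((i:ℕ) + (j:ℕ) + 2 ≤ k + 1)) :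
    IsEmpty {b : EndT k (n+1) j // b.1.1 (Fin.castSucc (Fin.last n)) = i} := by
  constructor
  rintro ⟨⟨⟨b, hb⟩, hlast⟩, hsec⟩
  have h := hb n (by omega)
  have e1 : (⟨n, Nat.lt_of_succ_lt (by omega : n + 1 < n + 2)⟩ : Fin (n+2))
      = Fin.castSucc (Fin.last n) := rfl
  have e2 : (⟨n+1, (by omega : n + 1 < n + 2)⟩ : Fin (n+2)) = Fin.last (n+1) := rfl
  rw [e1, e2] at h
  simp only at hlast hsec
  rw [hlast, hsec] at h
  exact hij h

lemma card_end (k : ℕ) : ∀ (n : ℕ) (j : Fin k), Nat.card (EndT k n j) = w k n j := by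
  intro n
  induction n with
  | zero =>
      intro j
      have : Unique (EndT k 0 j) :=
        { default := ⟨⟨fun _ => j, fun i h => by omega⟩, rfl⟩
          uniq := fun x => Subtype.ext (Subtype.ext (funext fun i => by
            have hi : i = Fin.last 0 := Fin.ext (by omega)
            rw [hi]
            exact x.2)) }
      rw [Nat.card_unique]
      rfl
  | succ n ih =>
      intro j
      rw [card_fiber_sum (fun b : EndT k (n+1) j => b.1.1 (Fin.castSucc (Fin.last n)))]
      show _ = ∑ i ∈ Finset.univ.filter (fun i : Fin k => (i:ℕ) + (j:ℕ) + 2 ≤ k + 1), w k n i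
      rw [Finset.sum_filter]
      refine Finset.sum_congr rfl (fun i _ => ?_)
      by_cases hij : (i:ℕ) + (j:ℕ) + 2 ≤ k + 1
      · rw [if_pos hij, ← ih i]
        exact Nat.card_congr (fiberEquiv k n j i hij)
      · rw [if_neg hij]
        have := fiber_empty k n j i hij
        exact Nat.card_of_isEmpty

lemma altCount_succ (k n : ℕ) : altCount k (n+1) = ∑ j, w k n j := by
  rw [altCount_eq_path]
  rw [card_fiber_sum (fun b : PathT k (n+1) => b.1 (Fin.last n))]
  exact Finset.sum_congr rfl (fun j _ => card_end k n j)

end CombLayer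

section PSLayer
open PowerSeries

noncomputable def Fps (k : ℕ) (j : Fin k) : PowerSeries ℚ :=
  PowerSeries.mk fun n => match n with
    | 0 => 0
    | m + 1 => (w k m j : ℚ)

lemma coeff_Fps_zero (k : ℕ) (j : Fin k) : (coeff 0) (Fps k j) = 0 := by
  simp [Fps, coeff_mk]

lemma coeff_Fps_succ (k : ℕ) (j : Fin k) (m : ℕ) :
    (coeff (m+1)) (Fps k j) = (w k m j : ℚ) := by
  simp [Fps, coeff_mk]

lemma Fps_eq (k : ℕ) (j : Fin k) :
    Fps k j = X + X * ∑ i ∈ Finset.univ.filter (fun i : Fin k => (i:ℕ) + (j:ℕ) + 2 ≤ k + 1),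
      Fps k i := by
  ext n
  rw [map_add]
  cases n with
  | zero =>
      rw [coeff_Fps_zero, coeff_X]
      simp [PowerSeries.coeff_zero_eq_constantCoeff]
  | succ m =>
      rw [coeff_Fps_succ, coeff_X, coeff_succ_X_mul, map_sum]
      cases m with
      | zero =>
          show (w k 0 j : ℚ) = _
          simp only [coeff_Fps_zero, Finset.sum_const_zero, if_pos rfl]
          show ((1:ℕ):ℚ) = 1 + 0
          norm_num
      | succ m' =>
          show (w k (m'+1) j : ℚ) = _
          simp only [coeff_Fps_succ]
          rw [if_neg (by omega), w]
          push_cast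
          ring

lemma cumulative_eq (k : ℕ) (hk : 1 ≤ k) :
    cumulativeGF k = 1 + Fps k ⟨0, hk⟩ := by
  ext n
  rw [map_add]
  cases n with
  | zero =>
      rw [coeff_Fps_zero]
      simp [cumulativeGF, coeff_mk, PowerSeries.coeff_zero_eq_constantCoeff]
  | succ m =>
      rw [coeff_Fps_succ, PowerSeries.coeff_one, if_neg (by omega)]
      simp only [cumulativeGF, coeff_mk]
      show (altCount k m : ℚ) = 0 + (w k m ⟨0, hk⟩ : ℚ)
      rw [zero_add]
      cases m with
      | zero => rw [altCount_zero]; rfl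
      | succ m' =>
          rw [altCount_succ, w]
          congr 1
          rw [Finset.filter_true_of_mem (fun i _ => by
            have := i.isLt
            show (i:ℕ) + ((⟨0, hk⟩ : Fin k):ℕ) + 2 ≤ k + 1
            simp only [Fin.val_mk]
            omega)]

/-- `Fps` with ℕ index. -/
noncomputable def Fn (k : ℕ) (t : ℕ) : PowerSeries ℚ :=
  if h : t < k then Fps k ⟨t, h⟩ else 0

lemma Fn_eq (k t : ℕ) (h : t < k) :
    Fn k t = X + X * ∑ i ∈ Finset.univ.filter (fun i : Fin k => (i:ℕ) + t + 2 ≤ k + 1),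
      Fps k i := by
  rw [Fn, dif_pos h]
  exact Fps_eq k ⟨t, h⟩

lemma Fn_base (k : ℕ) (hk : 1 ≤ k) : Fn k (k-1) = X + X * Fn k 0 := by
  rw [Fn_eq k (k-1) (by omega), Fn, dif_pos (by omega : 0 < k)]
  congr 1
  rw [show Finset.univ.filter (fun i : Fin k => (i:ℕ) + (k-1) + 2 ≤ k + 1)
      = {⟨0, by omega⟩} from ?_, Finset.sum_singleton]
  ext i
  simp only [Finset.mem_filter, Finset.mem_univ, true_and, Finset.mem_singleton, Fin.ext_iff,
    Fin.val_mk]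
  omega

lemma Fn_diff (k j : ℕ) (hj : j + 1 ≤ k - 1) :
    Fn k j = Fn k (j+1) + X * Fn k (k-1-j) := by
  have hk2 : 2 ≤ k := by omega
  rw [Fn_eq k j (by omega), Fn_eq k (j+1) (by omega), Fn, dif_pos (by omega : k-1-j < k)]
  rw [show Finset.univ.filter (fun i : Fin k => (i:ℕ) + j + 2 ≤ k + 1)
      = insert ⟨k-1-j, by omega⟩
          (Finset.univ.filter (fun i : Fin k => (i:ℕ) + (j+1) + 2 ≤ k + 1)) from ?_]
  · rw [Finset.sum_insert (by
      simp only [Finset.mem_filter, Finset.mem_univ, true_and, Fin.val_mk]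
      omega)]
    ring
  · ext i
    simp only [Finset.mem_filter, Finset.mem_univ, true_and, Finset.mem_insert, Fin.ext_iff,
      Fin.val_mk]
    omega

lemma coe_sub' (p q : Polynomial ℚ) : ((p - q : Polynomial ℚ) : ℚ⟦X⟧)
    = (p : ℚ⟦X⟧) - (q : ℚ⟦X⟧) := by
  simpa using (Polynomial.coeToPowerSeries.ringHom (R := ℚ)).map_sub p q

lemma main_ind (k : ℕ) (hk : 1 ≤ k) :
    ∀ t, t ≤ k - 1 →
      (Fn k t = (Ppoly t : ℚ⟦X⟧) + (Qp t : ℚ⟦X⟧) * Fn k 0 ∧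
       Fn k (k-1-t) = X * (Qp t : ℚ⟦X⟧) + (Sp t : ℚ⟦X⟧) * Fn k 0) := by
  intro t
  induction t with
  | zero =>
      intro _
      constructor
      · show Fn k 0 = ((0 : Polynomial ℚ) : ℚ⟦X⟧) + ((1 : Polynomial ℚ) : ℚ⟦X⟧) * Fn k 0
        simp
      · show Fn k (k-1-0) = X * ((1 : Polynomial ℚ) : ℚ⟦X⟧)
          + ((Polynomial.X : Polynomial ℚ) : ℚ⟦X⟧) * Fn k 0
        rw [show k-1-0 = k-1 from rfl, Fn_base k hk]
        simp
  | succ s ih =>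
      intro hs
      obtain ⟨ih1, ih2⟩ := ih (by omega)
      have hd := Fn_diff k s hs
      have e1 : Fn k (s+1) = Fn k s - X * Fn k (k-1-s) := by linear_combination -hd
      have c1 : (Ppoly (s+1) : ℚ⟦X⟧)
          = (Ppoly s : ℚ⟦X⟧) - X * (X * (Qp s : ℚ⟦X⟧)) := by
        have h := congrArg (fun p : Polynomial ℚ => (p : ℚ⟦X⟧)) (Ppoly_succ s)
        simpa [coe_sub'] using h
      have c2 : (Qp (s+1) : ℚ⟦X⟧) = (Qp s : ℚ⟦X⟧) - X * (Sp s : ℚ⟦X⟧) := by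
        have h := congrArg (fun p : Polynomial ℚ => (p : ℚ⟦X⟧))
          (show Qp (s+1) = Qp s - Polynomial.X * Sp s from rfl)
        simpa [coe_sub'] using h
      have c3 : (Sp (s+1) : ℚ⟦X⟧) = (Sp s : ℚ⟦X⟧) + X * (Qp (s+1) : ℚ⟦X⟧) := by
        have h := congrArg (fun p : Polynomial ℚ => (p : ℚ⟦X⟧))
          (show Sp (s+1) = Sp s + Polynomial.X * Qp (s+1) from rfl)
        simpa using h
      have first : Fn k (s+1) = (Ppoly (s+1) : ℚ⟦X⟧) + (Qp (s+1) : ℚ⟦X⟧) * Fn k 0 := by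
        rw [e1, ih1, ih2, c1, c2]
        ring
      refine ⟨first, ?_⟩
      have hd2 := Fn_diff k (k-2-s) (by omega)
      rw [show k-2-s+1 = k-1-s by omega, show k-1-(k-2-s) = s+1 by omega,
        show k-2-s = k-1-(s+1) by omega] at hd2
      have cdef : (Ppoly (s+1) : ℚ⟦X⟧) = -(X * (Sp s : ℚ⟦X⟧)) := by
        have h := congrArg (fun p : Polynomial ℚ => (p : ℚ⟦X⟧))
          (show Ppoly (s+1) = -(Polynomial.X * Sp s) by rw [Ppoly]; ring)
        simpa using h
      rw [hd2, ih2, first, c3, c2, cdef]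
      ring

/-- Corollary 11: `(U_k(x/2) + (−1)^k U_{k−1}(x/2)) G_k(x)
  = −(U_{k−2}(x/2) + (−1)^k U_{k−3}(x/2))`. -/
theorem statement5 (k : ℕ) (hk : 1 ≤ k) :
    ((U2 k : PowerSeries ℚ) + (-1) ^ k * (U2 ((k : ℤ) - 1) : PowerSeries ℚ)) * cumulativeGF k
      = -((U2 ((k : ℤ) - 2) : PowerSeries ℚ) + (-1) ^ k * (U2 ((k : ℤ) - 3) : PowerSeries ℚ)) := by
  obtain ⟨h1, _⟩ := main_ind k hk (k-1) le_rfl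
  have hbase := Fn_base k hk
  rw [h1] at hbase
  have hclose : ((Qp (k-1) : ℚ⟦X⟧) - X) * Fn k 0 = X - (Ppoly (k-1) : ℚ⟦X⟧) := by
    linear_combination hbase
  have l1 := congrArg (fun p : Polynomial ℚ => (p : ℚ⟦X⟧)) (L1k k hk)
  have l2 := congrArg (fun p : Polynomial ℚ => (p : ℚ⟦X⟧)) (L2k k hk)
  simp only [coe_sub', Polynomial.coe_add, Polynomial.coe_mul, Polynomial.coe_pow,
    Polynomial.coe_neg, Polynomial.coe_one, Polynomial.coe_X] at l1 l2
  have hD0 : ((U2 ((k:ℤ)-3) - (-1 : Polynomial ℚ)^k * U2 ((k:ℤ)-2) : Polynomial ℚ) : ℚ⟦X⟧)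
      ≠ 0 := by
    rw [Ne, Polynomial.coe_eq_zero_iff]
    exact L3k k hk
  simp only [coe_sub', Polynomial.coe_mul, Polynomial.coe_pow, Polynomial.coe_neg,
    Polynomial.coe_one] at hD0
  have hzero : ((U2 ((k:ℤ)-3) : ℚ⟦X⟧) - (-1 : ℚ⟦X⟧)^k * (U2 ((k:ℤ)-2) : ℚ⟦X⟧))
      * (((U2 (k:ℤ) : ℚ⟦X⟧) + (-1 : ℚ⟦X⟧)^k * (U2 ((k:ℤ)-1) : ℚ⟦X⟧)) * Fn k 0
        + ((U2 (k:ℤ) : ℚ⟦X⟧) + (-1 : ℚ⟦X⟧)^k * (U2 ((k:ℤ)-1) : ℚ⟦X⟧))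
        + ((U2 ((k:ℤ)-2) : ℚ⟦X⟧) + (-1 : ℚ⟦X⟧)^k * (U2 ((k:ℤ)-3) : ℚ⟦X⟧))) = 0 := by
    linear_combination hclose + l2 - (Fn k 0) * l1
  rcases mul_eq_zero.mp hzero with h | h
  · exact absurd h hD0
  · have hF0 : Fn k 0 = Fps k ⟨0, hk⟩ := dif_pos hk
    rw [cumulative_eq k hk, ← hF0]
    linear_combination h

end PSLayer
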